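/- arXiv:1104.1509 — 4 statements merged into one kernel-verified Lean document; each statement's English description precedes it below -/
import Mathlib

section
/- Let g be a Lie algebra of vector fields (or an abstract Lie algebra) containing elements H1, H2, T and scalar-valued functions (elements of the module of coefficients) Φ1, Φ2 such that [H1,H2] = 4T, [H1,T] = Φ1·T and [H2,T] = Φ2·T. Then H1(Φ2) = H2(Φ1), i.e., the derivative of Φ2 along H1 equals the derivative of Φ1 along H2. -/
/-- In a Lie algebra of derivations (vector fields) of the algebra of
functions `A`, if `⁅H₁,H₂⁆ = 4T`, `⁅Hᵢ,T⁆ = Φᵢ • T` and `T` is nowhere vanishing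
(non-torsion over functions), then `H₁(Φ₂) = H₂(Φ₁)`. -/
theorem deriv_coeff_symm {A : Type*} [CommRing A] [Algebra ℝ A]
    (H1 H2 T : Derivation ℝ A A) (Φ1 Φ2 : A)
    (hbr : ⁅H1, H2⁆ = (4 : A) • T)
    (h1 : ⁅H1, T⁆ = Φ1 • T)
    (h2 : ⁅H2, T⁆ = Φ2 • T)
    (hT : ∀ f : A, f • T = 0 → f = 0) :
    H1 Φ2 = H2 Φ1 := by
  have key : (H1 Φ2 - H2 Φ1) • T = 0 := by
    ext a
    have E := lie_lie H1 H2 T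
    rw [hbr, h1, h2] at E
    have E2 := congrArg (fun D : Derivation ℝ A A => D a) E
    have hT4 : T (4 : A) = 0 := by
      have : ((4 : A)) = algebraMap ℝ A 4 := by
        simp [map_ofNat]
      rw [this, Derivation.map_algebraMap]
    have e1 := congrArg (fun D : Derivation ℝ A A => D a) h1
    have e2 := congrArg (fun D : Derivation ℝ A A => D a) h2
    simp only [Derivation.commutator_apply, Derivation.smul_apply, Derivation.sub_apply,
      smul_eq_mul, Derivation.leibniz, map_mul] at E2 e1 e2 ⊢
    rw [hT4] at E2
    have hE1 : H1 (T a) = Φ1 * T a + T (H1 a) := by linear_combination e1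
    have hE2 : H2 (T a) = Φ2 * T a + T (H2 a) := by linear_combination e2
    rw [hE1, hE2] at E2
    simp only [Derivation.zero_apply]
    linear_combination -E2
  exact sub_eq_zero.mp (hT _ key)
end

section
/- In the free Lie algebra on two generators h1, h2, the length-6 relation 0 = [h1,[h1,[h1,[h2,[h1,h2]]]]] − 2·[h1,[h2,[h1,[h1,[h1,h2]]]]] + [h2,[h1,[h1,[h1,[h1,h2]]]]] holds among simple iterated brackets. -/
/-- In the free Lie algebra on two generators `h1, h2`,
`0 = [h1,[h1,[h1,[h2,[h1,h2]]]]] − 2·[h1,[h2,[h1,[h1,[h1,h2]]]]] + [h2,[h1,[h1,[h1,[h1,h2]]]]]`. -/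
theorem freeLie_length_six_relation_one
    (h1 h2 : FreeLieAlgebra ℚ (Fin 2))
    (hh1 : h1 = FreeLieAlgebra.of ℚ 0) (hh2 : h2 = FreeLieAlgebra.of ℚ 1) :
    (0 : FreeLieAlgebra ℚ (Fin 2)) =
      ⁅h1, ⁅h1, ⁅h1, ⁅h2, ⁅h1, h2⁆⁆⁆⁆⁆
      - (2 : ℚ) • ⁅h1, ⁅h2, ⁅h1, ⁅h1, ⁅h1, h2⁆⁆⁆⁆⁆
      + ⁅h2, ⁅h1, ⁅h1, ⁅h1, ⁅h1, h2⁆⁆⁆⁆⁆ := by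
  set a := ⁅h1, h2⁆ with ha
  set c := ⁅h1, a⁆ with hc
  set d := ⁅h1, c⁆ with hd
  set e := ⁅h1, d⁆ with he
  have s1 : ⁅h1, ⁅h2, a⁆⁆ = ⁅h2, c⁆ := by
    rw [leibniz_lie]; simp [← ha, ← hc]
  have s2 : ⁅h1, ⁅h2, c⁆⁆ = ⁅a, c⁆ + ⁅h2, d⁆ := by
    rw [leibniz_lie, ← ha, ← hd]
  have s3 : ⁅h1, ⁅h2, d⁆⁆ = ⁅a, d⁆ + ⁅h2, e⁆ := by
    rw [leibniz_lie, ← ha, ← he]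
  have s4 : ⁅h1, ⁅a, c⁆⁆ = ⁅a, d⁆ := by
    rw [leibniz_lie, ← hc, ← hd]; simp
  have t1 : ⁅h1, ⁅h1, ⁅h1, ⁅h2, a⁆⁆⁆⁆ = ⁅a, d⁆ + ⁅a, d⁆ + ⁅h2, e⁆ := by
    rw [s1, s2, lie_add, s3, s4, add_assoc]
  have t2 : ⁅h1, ⁅h2, ⁅h1, ⁅h1, a⁆⁆⁆⁆ = ⁅a, d⁆ + ⁅h2, e⁆ := by
    rw [← hc, ← hd, s3]
  rw [t1, t2, two_smul]
  abel
end

section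
/- In the free Lie algebra on two generators h1, h2, the length-6 relation 0 = [h1,[h1,[h2,[h2,[h1,h2]]]]] − 3·[h1,[h2,[h1,[h2,[h1,h2]]]]] + 3·[h2,[h1,[h1,[h2,[h1,h2]]]]] − [h2,[h2,[h1,[h1,[h1,h2]]]]] holds. -/
/-- The relation holds in any Lie algebra over `ℚ`, as a consequence of the
Jacobi identity.  With `c = ⁅h1,h2⁆`, `u = ⁅h1,c⁆`, `v = ⁅h2,c⁆`, the
combination equals `(T1 - T2) - 2•(T2 - T3) + (T3 - T4)`, and each difference
collapses using Leibniz/Jacobi. -/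
theorem freeLie_length_six_relation_three_aux {L : Type*} [LieRing L] [LieAlgebra ℚ L]
    (h1 h2 : L) :
    (0 : L) =
      ⁅h1, ⁅h1, ⁅h2, ⁅h2, ⁅h1, h2⁆⁆⁆⁆⁆
      - (3 : ℚ) • ⁅h1, ⁅h2, ⁅h1, ⁅h2, ⁅h1, h2⁆⁆⁆⁆⁆
      + (3 : ℚ) • ⁅h2, ⁅h1, ⁅h1, ⁅h2, ⁅h1, h2⁆⁆⁆⁆⁆
      - ⁅h2, ⁅h2, ⁅h1, ⁅h1, ⁅h1, h2⁆⁆⁆⁆⁆ := by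
  set c : L := ⁅h1, h2⁆ with hc
  set u : L := ⁅h1, c⁆ with hu
  set v : L := ⁅h2, c⁆ with hv
  -- ⁅h1, ⁅h2, c⁆⁆ = ⁅h2, ⁅h1, c⁆⁆ since ⁅c, c⁆ = 0
  have swap : ⁅h1, v⁆ = ⁅h2, u⁆ := by
    rw [hu, hv, leibniz_lie h1 h2 c, ← hc, lie_self, zero_add]
  have e1 : ⁅h1, ⁅h1, ⁅h2, v⁆⁆⁆ - ⁅h1, ⁅h2, ⁅h1, v⁆⁆⁆ = ⁅h1, ⁅c, v⁆⁆ := by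
    rw [← lie_sub, leibniz_lie h1 h2 v, ← hc, add_sub_cancel_right]
  have e2 : ⁅h1, ⁅h2, ⁅h1, v⁆⁆⁆ - ⁅h2, ⁅h1, ⁅h1, v⁆⁆⁆ = ⁅c, ⁅h2, u⁆⁆ := by
    rw [leibniz_lie h1 h2 ⁅h1, v⁆, ← hc, add_sub_cancel_right, swap]
  have e3 : ⁅h2, ⁅h1, ⁅h1, v⁆⁆⁆ - ⁅h2, ⁅h2, ⁅h1, u⁆⁆⁆ = ⁅h2, ⁅c, u⁆⁆ := by
    rw [swap, ← lie_sub, leibniz_lie h1 h2 u, ← hc, add_sub_cancel_right]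
  have f1 : ⁅h1, ⁅c, v⁆⁆ = ⁅u, v⁆ + ⁅c, ⁅h2, u⁆⁆ := by
    rw [leibniz_lie h1 c v, ← hu, swap]
  have f3 : ⁅h2, ⁅c, u⁆⁆ = -⁅u, v⁆ + ⁅c, ⁅h2, u⁆⁆ := by
    rw [leibniz_lie h2 c u, ← hv, lie_skew v u]
  have total :
      ⁅h1, ⁅h1, ⁅h2, v⁆⁆⁆ - (3 : ℚ) • ⁅h1, ⁅h2, ⁅h1, v⁆⁆⁆
        + (3 : ℚ) • ⁅h2, ⁅h1, ⁅h1, v⁆⁆⁆ - ⁅h2, ⁅h2, ⁅h1, u⁆⁆⁆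
      = (⁅h1, ⁅h1, ⁅h2, v⁆⁆⁆ - ⁅h1, ⁅h2, ⁅h1, v⁆⁆⁆)
        - (2 : ℚ) • (⁅h1, ⁅h2, ⁅h1, v⁆⁆⁆ - ⁅h2, ⁅h1, ⁅h1, v⁆⁆⁆)
        + (⁅h2, ⁅h1, ⁅h1, v⁆⁆⁆ - ⁅h2, ⁅h2, ⁅h1, u⁆⁆⁆) := by module
  rw [total, e1, e2, e3, f1, f3]
  module

/-- In the free Lie algebra on two generators `h1, h2`,
`0 = [h1,[h1,[h2,[h2,[h1,h2]]]]] − 3·[h1,[h2,[h1,[h2,[h1,h2]]]]]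
     + 3·[h2,[h1,[h1,[h2,[h1,h2]]]]] − [h2,[h2,[h1,[h1,[h1,h2]]]]]`. -/
theorem freeLie_length_six_relation_three
    (h1 h2 : FreeLieAlgebra ℚ (Fin 2))
    (hh1 : h1 = FreeLieAlgebra.of ℚ 0) (hh2 : h2 = FreeLieAlgebra.of ℚ 1) :
    (0 : FreeLieAlgebra ℚ (Fin 2)) =
      ⁅h1, ⁅h1, ⁅h2, ⁅h2, ⁅h1, h2⁆⁆⁆⁆⁆
      - (3 : ℚ) • ⁅h1, ⁅h2, ⁅h1, ⁅h2, ⁅h1, h2⁆⁆⁆⁆⁆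
      + (3 : ℚ) • ⁅h2, ⁅h1, ⁅h1, ⁅h2, ⁅h1, h2⁆⁆⁆⁆⁆
      - ⁅h2, ⁅h2, ⁅h1, ⁅h1, ⁅h1, h2⁆⁆⁆⁆⁆ :=
  freeLie_length_six_relation_three_aux h1 h2
end

section
/- Consider the Heisenberg Lie algebra g_- = ℝx1 ⊕ ℝx2 ⊕ ℝx3 with only nonzero bracket [x2,x3] = 4x1, endowed with the complex structure J on g_{-1} = ℝx2 ⊕ ℝx3 given by J(x2) = x3, J(x3) = −x2. Then the space g_0 of grading-preserving, J-compatible derivations of g_- is exactly 2-dimensional, spanned by the derivations x4: (x1 ↦ −2x1, x2 ↦ −x2, x3 ↦ −x3) and x5: (x1 ↦ 0, x2 ↦ −x3, x3 ↦ x2). -/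
/-- The Heisenberg Lie algebra `g_- = ℝx1 ⊕ ℝx2 ⊕ ℝx3` (coordinates `0,1,2` of
`Fin 3 → ℝ`) with only nonzero bracket `[x2,x3] = 4x1`. -/
def hBracket (u v : Fin 3 → ℝ) : Fin 3 → ℝ :=
  ![4 * (u 1 * v 2 - u 2 * v 1), 0, 0]

/-- The complex structure `J` on `g_{-1}`: `J(x2) = x3`, `J(x3) = −x2`
(extended by `0` on `x1`). -/
noncomputable def Jmap : (Fin 3 → ℝ) →ₗ[ℝ] (Fin 3 → ℝ) :=
  Matrix.toLin' !![(0 : ℝ), 0, 0; 0, 0, -1; 0, 1, 0]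

/-- The derivation `x4 : x1 ↦ −2x1, x2 ↦ −x2, x3 ↦ −x3`. -/
noncomputable def X4 : (Fin 3 → ℝ) →ₗ[ℝ] (Fin 3 → ℝ) :=
  Matrix.toLin' !![(-2 : ℝ), 0, 0; 0, -1, 0; 0, 0, -1]

/-- The derivation `x5 : x1 ↦ 0, x2 ↦ −x3, x3 ↦ x2`. -/
noncomputable def X5 : (Fin 3 → ℝ) →ₗ[ℝ] (Fin 3 → ℝ) :=
  Matrix.toLin' !![(0 : ℝ), 0, 0; 0, 0, 1; 0, -1, 0]


/-! A grading-preserving derivation `D` of the Heisenberg algebra is determined by its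
restriction to `g_{-1}`, since `D x1 = D [x2, x3] / 4` is forced by the Leibniz rule. On
`g_{-1}` the map commutes with `J`, so it is multiplication by a complex number `α + iβ`,
i.e. `-α x4 - β x5` there; the Leibniz rule then gives `D x1 = tr (D|g_{-1}) x1 = 2α x1`,
which is the value of `-α x4`. Conversely every `a x4 + b x5` preserves the grading,
commutes with `J`, and is a derivation: `x4` is the grading derivation and `x5` is a
rotation of `g_{-1}`, which preserves the symplectic form `[·,·]`. -/

def IsG0 (D : (Fin 3 → ℝ) →ₗ[ℝ] (Fin 3 → ℝ)) : Prop :=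
  (∀ v : Fin 3 → ℝ, v 1 = 0 ∧ v 2 = 0 → D v 1 = 0 ∧ D v 2 = 0) ∧
  (∀ v : Fin 3 → ℝ, v 0 = 0 → D v 0 = 0) ∧
  (∀ y z : Fin 3 → ℝ, D (hBracket y z) = hBracket (D y) z + hBracket y (D z)) ∧
  (∀ v : Fin 3 → ℝ, v 0 = 0 → D (Jmap v) = Jmap (D v))

lemma Jmap_apply (v : Fin 3 → ℝ) : Jmap v = ![0, -v 2, v 1] := by
  ext i
  fin_cases i <;> simp [Jmap, Matrix.mulVec, dotProduct, Fin.sum_univ_three]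

lemma smul_X4_add_smul_X5_apply (a b : ℝ) (v : Fin 3 → ℝ) :
    (a • X4 + b • X5) v = ![-2 * a * v 0, -a * v 1 + b * v 2, -b * v 1 - a * v 2] := by
  ext i
  fin_cases i <;> simp [X4, X5, dotProduct, Fin.sum_univ_three] <;> ring

lemma hBracket_single_one_single_two :
    hBracket (Pi.single 1 1) (Pi.single 2 1) = (4 : ℝ) • Pi.single 0 1 := by
  ext i
  fin_cases i <;> simp [hBracket]

lemma Jmap_single_one : Jmap (Pi.single 1 1) = Pi.single 2 1 := by
  ext i
  fin_cases i <;> simp [Jmap_apply]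

lemma eq_smul_X4_add_smul_X5_of_isG0 {D : (Fin 3 → ℝ) →ₗ[ℝ] (Fin 3 → ℝ)} (hD : IsG0 D) :
    D = (-D (Pi.single 1 1) 1) • X4 + (-D (Pi.single 1 1) 2) • X5 := by
  obtain ⟨hgr₂, hgr₁, hder, hJ⟩ := hD
  set u := D (Pi.single 1 1)
  have hx2 : D (Pi.single 1 1) 0 = 0 := hgr₁ _ (by simp)
  have hx3 : D (Pi.single 2 1) = ![0, -u 2, u 1] := by
    rw [← Jmap_single_one, hJ _ (by simp), Jmap_apply]
  obtain ⟨hx1₁, hx1₂⟩ := hgr₂ (Pi.single 0 1) (by simp)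
  have hx1₀ : D (Pi.single 0 1) 0 = 2 * u 1 := by
    have h := congrFun (hder (Pi.single 1 1) (Pi.single 2 1)) 0
    rw [hBracket_single_one_single_two, map_smul, hx3] at h
    simp [hBracket] at h
    linarith
  refine (Pi.basisFun ℝ (Fin 3)).ext fun i => ?_
  rw [Pi.basisFun_apply, smul_X4_add_smul_X5_apply]
  ext j
  fin_cases i <;> fin_cases j <;> simp [u, hx1₀, hx1₁, hx1₂, hx2, hx3]

lemma isG0_smul_X4_add_smul_X5 (a b : ℝ) : IsG0 (a • X4 + b • X5) := by
  simp only [IsG0, smul_X4_add_smul_X5_apply]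
  refine ⟨fun v ⟨h₁, h₂⟩ => by simp [h₁, h₂], fun v h₀ => by simp [h₀], fun y z => ?_,
    fun v _ => ?_⟩
  · ext i
    fin_cases i <;> simp [hBracket]; ring
  · rw [Jmap_apply, Jmap_apply]
    ext i
    fin_cases i <;> simp; ring

lemma eq_zero_of_smul_X4_add_smul_X5_eq_zero {a b : ℝ} (h : a • X4 + b • X5 = 0) :
    a = 0 ∧ b = 0 := by
  have h₁ := congrFun (LinearMap.congr_fun h (Pi.single 1 1)) 1
  have h₂ := congrFun (LinearMap.congr_fun h (Pi.single 1 1)) 2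
  rw [smul_X4_add_smul_X5_apply] at h₁ h₂
  simp at h₁ h₂
  exact ⟨h₁, h₂⟩

/-- The space `g_0` of grading-preserving, `J`-compatible
derivations of the Heisenberg algebra `g_-` is exactly 2-dimensional, spanned
by `x4` and `x5`. -/
theorem tanaka_g0 :
    (∀ D : (Fin 3 → ℝ) →ₗ[ℝ] (Fin 3 → ℝ),
      ((∀ v : Fin 3 → ℝ, v 1 = 0 ∧ v 2 = 0 → D v 1 = 0 ∧ D v 2 = 0) ∧
       (∀ v : Fin 3 → ℝ, v 0 = 0 → D v 0 = 0) ∧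
       (∀ y z : Fin 3 → ℝ, D (hBracket y z) = hBracket (D y) z + hBracket y (D z)) ∧
       (∀ v : Fin 3 → ℝ, v 0 = 0 → D (Jmap v) = Jmap (D v)))
      ↔ ∃ a b : ℝ, D = a • X4 + b • X5) ∧
    (∀ a b : ℝ, a • X4 + b • X5 = 0 → a = 0 ∧ b = 0) := by
  refine ⟨fun D => ⟨fun hD => ⟨_, _, eq_smul_X4_add_smul_X5_of_isG0 hD⟩, ?_⟩,
    fun a b => eq_zero_of_smul_X4_add_smul_X5_eq_zero⟩
  rintro ⟨a, b, rfl⟩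
  exact isG0_smul_X4_add_smul_X5 a b
end
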